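/- Let A be an n×n real symmetric matrix with eigenvalues λ₁ ≥ … ≥ λₙ, δ = λ_{n−1} − λₙ > 0, ρ = λ₁ − λₙ, and let γ, β > 0. If z = Σₖ αₖ pₖ ∈ ℝⁿ is a unit vector (pₖ the orthonormal eigenvectors) with αₙ² ≥ ((2+γ)β + ρ)/(δ + ρ), then for every unit v with vᵀz = 0 one has vᵀAv − zᵀAz + 6β Σₖ z_k² v_k² − 2β Σₖ z_k⁴ ≥ γβ. -/
import Mathlib


open Matrix Finset

set_option maxHeartbeats 1000000 in
theorem stmt13 {n : ℕ} (hn : 2 ≤ n) (A : Matrix (Fin n) (Fin n) ℝ) (hA : A.IsSymm)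
    (μ : Fin n → ℝ) (hμ : ∀ i j : Fin n, i ≤ j → μ j ≤ μ i)
    (p : Fin n → Fin n → ℝ)
    (hortho : ∀ i j, p i ⬝ᵥ p j = if i = j then (1 : ℝ) else 0)
    (heig : ∀ k, A.mulVec (p k) = μ k • p k)
    (δ ρ γ β : ℝ)
    (hδ : δ = μ ⟨n - 2, by omega⟩ - μ ⟨n - 1, by omega⟩) (hδpos : 0 < δ)
    (hρ : ρ = μ ⟨0, by omega⟩ - μ ⟨n - 1, by omega⟩)
    (hγ : 0 < γ) (hβ : 0 < β)
    (α : Fin n → ℝ) (z : Fin n → ℝ) (hzdef : z = ∑ k, α k • p k)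
    (hα1 : ∑ k, α k ^ 2 = 1)
    (hαn : ((2 + γ) * β + ρ) / (δ + ρ) ≤ α ⟨n - 1, by omega⟩ ^ 2)
    (v : Fin n → ℝ) (hv : ∑ k, v k ^ 2 = 1) (hvz : ∑ k, v k * z k = 0) :
    γ * β ≤ v ⬝ᵥ A.mulVec v - z ⬝ᵥ A.mulVec z
      + 6 * β * ∑ k, z k ^ 2 * v k ^ 2 - 2 * β * ∑ k, z k ^ 4 := by
  have hortho' : ∀ i j, ∑ k, p i k * p j k = if i = j then (1 : ℝ) else 0 := by
    intro i j; simpa [dotProduct] using hortho i j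
  -- transpose orthogonality
  have hPPt : (Matrix.of p) * (Matrix.of p)ᵀ = 1 := by
    ext i j
    simp [Matrix.mul_apply, Matrix.one_apply, hortho' i j]
  have hPtP : (Matrix.of p)ᵀ * (Matrix.of p) = 1 := mul_eq_one_comm.mp hPPt
  have horthoT : ∀ i j, ∑ k, p k i * p k j = if i = j then (1 : ℝ) else 0 := by
    intro i j
    have := congrFun (congrFun hPtP i) j
    simpa [Matrix.mul_apply, Matrix.one_apply] using this
  -- general lemma: expansion in eigenbasis
  have key : ∀ (c w : Fin n → ℝ), (∀ i, w i = ∑ k, c k * p k i) →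
      (∑ i, w i ^ 2 = ∑ k, c k ^ 2) ∧ (w ⬝ᵥ A.mulVec w = ∑ k, c k ^ 2 * μ k) := by
    intro c w hw
    have hAw : ∀ i, A.mulVec w i = ∑ k, c k * (μ k * p k i) := by
      intro i
      have : A.mulVec w i = ∑ j, A i j * ∑ k, c k * p k j := by
        simp [Matrix.mulVec, dotProduct, hw]
      rw [this]
      calc ∑ j, A i j * ∑ k, c k * p k j
          = ∑ j, ∑ k, c k * (A i j * p k j) := by
            refine Finset.sum_congr rfl fun j _ => ?_
            rw [Finset.mul_sum]
            exact Finset.sum_congr rfl fun k _ => by ring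
        _ = ∑ k, c k * (∑ j, A i j * p k j) := by
            rw [Finset.sum_comm]; simp [Finset.mul_sum]
        _ = ∑ k, c k * (μ k * p k i) := by
            refine Finset.sum_congr rfl fun k _ => ?_
            have h := congrFun (heig k) i
            simp only [Matrix.mulVec, dotProduct, Pi.smul_apply, smul_eq_mul] at h
            rw [h]
    constructor
    · calc ∑ i, w i ^ 2 = ∑ i, ∑ k, ∑ l, (c k * c l) * (p k i * p l i) := by
            refine Finset.sum_congr rfl fun i _ => ?_
            rw [hw, sq, Finset.sum_mul_sum]
            refine Finset.sum_congr rfl fun k _ => Finset.sum_congr rfl fun l _ => by ring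
        _ = ∑ k, ∑ l, (c k * c l) * ∑ i, p k i * p l i := by
            rw [Finset.sum_comm]
            refine Finset.sum_congr rfl fun k _ => ?_
            rw [Finset.sum_comm]
            refine Finset.sum_congr rfl fun l _ => by rw [Finset.mul_sum]
        _ = ∑ k, c k ^ 2 := by
            refine Finset.sum_congr rfl fun k _ => ?_
            rw [Finset.sum_eq_single k]
            · simp [hortho' k k]; ring
            · intro l _ hl; simp [hortho' k l, (Ne.symm hl : ¬ k = l)]
            · simp
    · calc w ⬝ᵥ A.mulVec w = ∑ i, ∑ k, ∑ l, (c k * (c l * μ l)) * (p k i * p l i) := by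
            refine Finset.sum_congr rfl fun i _ => ?_
            rw [hw i, hAw i, Finset.sum_mul_sum]
            refine Finset.sum_congr rfl fun k _ => Finset.sum_congr rfl fun l _ => by ring
        _ = ∑ k, ∑ l, (c k * (c l * μ l)) * ∑ i, p k i * p l i := by
            rw [Finset.sum_comm]
            refine Finset.sum_congr rfl fun k _ => ?_
            rw [Finset.sum_comm]
            refine Finset.sum_congr rfl fun l _ => by rw [Finset.mul_sum]
        _ = ∑ k, c k ^ 2 * μ k := by
            refine Finset.sum_congr rfl fun k _ => ?_
            rw [Finset.sum_eq_single k]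
            · simp [hortho' k k]; ring
            · intro l _ hl; simp [hortho' k l, (Ne.symm hl : ¬ k = l)]
            · simp
  have hzfun : ∀ i, z i = ∑ k, α k * p k i := by
    intro i; rw [hzdef]; simp
  set ν : Fin n → ℝ := fun k => ∑ i, v i * p k i with hν
  have hvfun : ∀ i, v i = ∑ k, ν k * p k i := by
    intro i
    have key2 : ∑ k, ν k * p k i = v i := by
      calc ∑ k, ν k * p k i
          = ∑ k, ∑ m, v m * (p k m * p k i) := by
            refine Finset.sum_congr rfl fun k _ => ?_
            show (∑ m, v m * p k m) * p k i = _
            rw [Finset.sum_mul]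
            exact Finset.sum_congr rfl fun m _ => by ring
        _ = ∑ m, v m * ∑ k, p k m * p k i := by
            rw [Finset.sum_comm]; simp [Finset.mul_sum]
        _ = v i := by
            rw [Finset.sum_eq_single i]
            · simp [horthoT i i]
            · intro m _ hm; simp [horthoT m i, hm]
            · simp
    exact key2.symm
  obtain ⟨hz2, hzA⟩ := key α z hzfun
  obtain ⟨hv2, hvA⟩ := key ν v hvfun
  have hν1 : ∑ k, ν k ^ 2 = 1 := by rw [← hv2, hv]
  rw [hα1] at hz2
  -- orthogonality in coordinates
  have horthc : ∑ k, α k * ν k = 0 := by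
    have : ∑ i, v i * z i = ∑ k, α k * ν k := by
      calc ∑ i, v i * z i = ∑ i, ∑ k, α k * (v i * p k i) := by
            refine Finset.sum_congr rfl fun i _ => ?_
            rw [hzfun i, Finset.mul_sum]
            exact Finset.sum_congr rfl fun k _ => by ring
        _ = ∑ k, α k * ν k := by
            rw [Finset.sum_comm]
            refine Finset.sum_congr rfl fun k _ => ?_
            rw [hν, Finset.mul_sum]
    rw [← this, hvz]
  set last : Fin n := ⟨n - 1, by omega⟩ with hlast
  set pen : Fin n := ⟨n - 2, by omega⟩ with hpen
  set top : Fin n := ⟨0, by omega⟩ with htop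
  have hρnn : 0 ≤ ρ := by
    rw [hρ]
    have := hμ top last (by simp [htop, hlast, Fin.le_def])
    linarith
  -- erase sums
  have hae : ∑ k ∈ Finset.univ.erase last, α k ^ 2 = 1 - α last ^ 2 := by
    have := Finset.sum_erase_add Finset.univ (fun k => α k ^ 2) (Finset.mem_univ last)
    rw [hα1] at this; linarith
  have hve : ∑ k ∈ Finset.univ.erase last, ν k ^ 2 = 1 - ν last ^ 2 := by
    have := Finset.sum_erase_add Finset.univ (fun k => ν k ^ 2) (Finset.mem_univ last)
    rw [hν1] at this; linarith
  have hoe : ∑ k ∈ Finset.univ.erase last, α k * ν k = -(α last * ν last) := by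
    have := Finset.sum_erase_add Finset.univ (fun k => α k * ν k) (Finset.mem_univ last)
    rw [horthc] at this; linarith
  -- Cauchy-Schwarz: ν last ^ 2 ≤ 1 - α last ^ 2
  have hCS := Finset.sum_mul_sq_le_sq_mul_sq (Finset.univ.erase last) α ν
  rw [hae, hve, hoe] at hCS
  have hsum1 : α last ^ 2 + ν last ^ 2 ≤ 1 := by nlinarith [sq_nonneg (α last * ν last)]
  -- eigenvalue bounds
  have hvlow : ν last ^ 2 * μ last + (1 - ν last ^ 2) * μ pen ≤ v ⬝ᵥ A.mulVec v := by
    rw [hvA]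
    have h1 : ∑ k ∈ Finset.univ.erase last, ν k ^ 2 * μ pen
        ≤ ∑ k ∈ Finset.univ.erase last, ν k ^ 2 * μ k := by
      refine Finset.sum_le_sum fun k hk => ?_
      have hk' : k ≠ last := Finset.ne_of_mem_erase hk
      have hkle : k ≤ pen := by
        rw [Fin.le_def]
        have := k.isLt
        have : k.val ≠ n - 1 := fun h => hk' (by rw [hlast]; exact Fin.ext h)
        simp only [hpen]
        omega
      exact mul_le_mul_of_nonneg_left (hμ k pen hkle) (sq_nonneg _)
    have h2 := Finset.sum_erase_add Finset.univ (fun k => ν k ^ 2 * μ k) (Finset.mem_univ last)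
    have h3 : ∑ k ∈ Finset.univ.erase last, ν k ^ 2 * μ pen = (1 - ν last ^ 2) * μ pen := by
      rw [← Finset.sum_mul, hve]
    linarith
  have hzup : z ⬝ᵥ A.mulVec z ≤ α last ^ 2 * μ last + (1 - α last ^ 2) * μ top := by
    rw [hzA]
    have h1 : ∑ k ∈ Finset.univ.erase last, α k ^ 2 * μ k
        ≤ ∑ k ∈ Finset.univ.erase last, α k ^ 2 * μ top := by
      refine Finset.sum_le_sum fun k hk => ?_
      have hkle : top ≤ k := by rw [Fin.le_def]; simp [htop]
      exact mul_le_mul_of_nonneg_left (hμ top k hkle) (sq_nonneg _)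
    have h2 := Finset.sum_erase_add Finset.univ (fun k => α k ^ 2 * μ k) (Finset.mem_univ last)
    have h3 : ∑ k ∈ Finset.univ.erase last, α k ^ 2 * μ top = (1 - α last ^ 2) * μ top := by
      rw [← Finset.sum_mul, hae]
    linarith
  -- quartic bound
  have hz2sum : ∑ k, z k ^ 2 = 1 := by rw [hz2]
  have hquart : ∑ k, z k ^ 4 ≤ 1 := by
    have h1 : ∀ k : Fin n, z k ^ 4 ≤ z k ^ 2 * ∑ j, z j ^ 2 := by
      intro k
      have : z k ^ 2 ≤ ∑ j, z j ^ 2 :=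
        Finset.single_le_sum (fun j _ => sq_nonneg (z j)) (Finset.mem_univ k)
      nlinarith [sq_nonneg (z k)]
    calc ∑ k, z k ^ 4 ≤ ∑ k, z k ^ 2 * ∑ j, z j ^ 2 :=
          Finset.sum_le_sum fun k _ => h1 k
      _ = 1 := by rw [← Finset.sum_mul, hz2sum]; ring
  have hmix : 0 ≤ ∑ k, z k ^ 2 * v k ^ 2 :=
    Finset.sum_nonneg fun k _ => mul_nonneg (sq_nonneg _) (sq_nonneg _)
  -- combine
  have hδρ : 0 < δ + ρ := by linarith
  have hαn' : (2 + γ) * β + ρ ≤ α last ^ 2 * (δ + ρ) := by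
    rw [div_le_iff₀ hδρ] at hαn
    linarith
  have hμpen : μ pen = μ last + δ := by rw [hδ]; ring
  have hμtop : μ top = μ last + ρ := by rw [hρ]; ring
  nlinarith [sq_nonneg (ν last), sq_nonneg (α last), mul_pos hγ hβ,
    mul_le_mul_of_nonneg_right hsum1 (le_of_lt hδpos)]
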